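/- arXiv:1707.08746 — 2 statements merged into one kernel-verified Lean document; each statement's English description precedes it below -/
import Mathlib

section
/- Validity of axiom A11: ⟨[G]⟩φ → ⟨G⟩[A∖G]φ is valid. That is, for every pointed epistemic model (M,w), finite agent set A, coalition G ⊆ A, and formula φ: if there exists ψ ∈ L_EL^G such that (M,w) ⊨ ψ and for all χ ∈ L_EL^{A∖G}, (M,w) ⊨ [ψ ∧ χ]φ, then there exists ψ' ∈ L_EL^G such that (M,w) ⊨ ψ' and for all χ' ∈ L_EL^{A∖G}, (M^{ψ'},w) ⊨ [χ']φ (i.e., (M,w) ⊨ ⟨ψ'⟩[A∖G]φ). -/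
inductive Form (A : Type) : Type
  | atom : Nat → Form A
  | bot  : Form A
  | neg  : Form A → Form A
  | and  : Form A → Form A → Form A
  | know : A → Form A → Form A
  | ann  : Form A → Form A → Form A

def Form.imp {A : Type} (φ ψ : Form A) : Form A := .neg (.and φ (.neg ψ))

def Form.top {A : Type} : Form A := .neg .bot

/-- Purely epistemic (announcement-free) formulas: the language L_EL. -/
def Form.IsEL {A : Type} : Form A → Prop
  | .atom _ => True
  | .bot => True
  | .neg φ => φ.IsEL
  | .and φ ψ => φ.IsEL ∧ ψ.IsEL
  | .know _ φ => φ.IsEL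
  | .ann _ _ => False

structure Model (A : Type) where
  W : Type
  R : A → W → W → Prop
  V : Nat → W → Prop

/-- The submodel induced by a set of states. -/
def Model.restrict {A : Type} (M : Model A) (S : Set M.W) : Model A where
  W := {v : M.W // v ∈ S}
  R := fun a v u => M.R a v.1 u.1
  V := fun n v => M.V n v.1

/-- Satisfaction for public announcement logic. -/
def Sat {A : Type} : (M : Model A) → M.W → Form A → Prop
  | M, w, .atom n => M.V n w
  | _, _, .bot => False
  | M, w, .neg φ => ¬ Sat M w φ
  | M, w, .and φ ψ => Sat M w φ ∧ Sat M w ψ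
  | M, w, .know a φ => ∀ v, M.R a w v → Sat M v φ
  | M, w, .ann φ ψ => ∀ h : Sat M w φ, Sat (M.restrict {v | Sat M v φ}) ⟨w, h⟩ ψ

/-- An epistemic (S5) model: every accessibility relation is an equivalence. -/
def Model.IsEpistemic {A : Type} (M : Model A) : Prop := ∀ a, Equivalence (M.R a)

/-- Group announcement formula ⋀_{i ∈ G} K_i (f i). -/
noncomputable def gConj {A : Type} (G : Finset A) (f : A → Form A) : Form A :=
  G.toList.foldr (fun a r => (Form.know a (f a)).and r) Form.top


/-- Relativization (standard translation): `rel ψ χ` says what χ would say after announcing ψ. -/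
def Form.rel {A : Type} (ψ : Form A) : Form A → Form A
  | .atom n => .atom n
  | .bot => .bot
  | .neg χ => .neg (rel ψ χ)
  | .and χ₁ χ₂ => .and (rel ψ χ₁) (rel ψ χ₂)
  | .know a χ => .know a (ψ.imp (rel ψ χ))
  | .ann _ _ => .bot

lemma rel_isEL {A : Type} {ψ χ : Form A} (hψ : ψ.IsEL) (hχ : χ.IsEL) :
    (ψ.rel χ).IsEL := by
  induction χ with
  | atom n => trivial
  | bot => trivial
  | neg χ ih => exact ih hχ
  | and χ₁ χ₂ ih₁ ih₂ => exact ⟨ih₁ hχ.1, ih₂ hχ.2⟩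
  | know a χ ih => exact ⟨hψ, ih hχ⟩
  | ann _ _ _ _ => exact hχ.elim

lemma sat_rel {A : Type} (χ : Form A) (hχ : χ.IsEL) (M : Model A) (ψ : Form A) :
    ∀ (v : M.W) (hv : Sat M v ψ),
      Sat (M.restrict {u | Sat M u ψ}) ⟨v, hv⟩ χ ↔ Sat M v (ψ.rel χ) := by
  induction χ with
  | atom n => intro v hv; exact Iff.rfl
  | bot => intro v hv; exact Iff.rfl
  | neg χ ih => intro v hv; exact not_congr (ih hχ v hv)
  | and χ₁ χ₂ ih₁ ih₂ => intro v hv; exact and_congr (ih₁ hχ.1 v hv) (ih₂ hχ.2 v hv)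
  | know a χ ih =>
    intro v hv
    constructor
    · intro H u hr
      simp only [Sat, Form.imp, not_and, not_not]
      intro hu
      exact (ih hχ u hu).mp (H ⟨u, hu⟩ hr)
    · intro H u hr
      have := H u.1 hr
      simp only [Sat, Form.imp, not_and, not_not] at this
      exact (ih hχ u.1 u.2).mpr (this u.2)
  | ann _ _ _ _ => exact hχ.elim

lemma rel_gConj {A : Type} [DecidableEq A] (S : Finset A) (ψ : Form A) (g : A → Form A) :
    ψ.rel (gConj S g) = gConj S (fun a => ψ.imp (ψ.rel (g a))) := by
  unfold gConj
  induction S.toList with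
  | nil => rfl
  | cons a l ih => simp only [List.foldr_cons, Form.rel, ih]

lemma gConj_isEL {A : Type} [DecidableEq A] (S : Finset A) (g : A → Form A)
    (hg : ∀ a, (g a).IsEL) : (gConj S g).IsEL := by
  unfold gConj
  induction S.toList with
  | nil => trivial
  | cons a l ih => exact ⟨hg a, ih⟩

lemma sat_iso {A : Type} (θ : Form A) :
    ∀ (M N : Model A) (e : M.W ≃ N.W),
      (∀ a v u, M.R a v u ↔ N.R a (e v) (e u)) →
      (∀ n v, M.V n v ↔ N.V n (e v)) →
      ∀ w, Sat M w θ ↔ Sat N (e w) θ := by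
  induction θ with
  | atom n => intro M N e hR hV w; exact hV n w
  | bot => intro M N e hR hV w; exact Iff.rfl
  | neg χ ih => intro M N e hR hV w; exact not_congr (ih M N e hR hV w)
  | and χ₁ χ₂ ih₁ ih₂ =>
    intro M N e hR hV w; exact and_congr (ih₁ M N e hR hV w) (ih₂ M N e hR hV w)
  | know a χ ih =>
    intro M N e hR hV w
    constructor
    · intro H u hr
      have := H (e.symm u) ((hR a w (e.symm u)).mpr (by simpa using hr))
      simpa using (ih M N e hR hV (e.symm u)).mp this
    · intro H u hr
      exact (ih M N e hR hV u).mpr (H (e u) ((hR a w u).mp hr))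
  | ann χ₁ χ₂ ih₁ ih₂ =>
    intro M N e hR hV w
    have hset : ∀ v : M.W, Sat M v χ₁ ↔ Sat N (e v) χ₁ := fun v => ih₁ M N e hR hV v
    let e' : {v : M.W // v ∈ {u | Sat M u χ₁}} ≃ {v : N.W // v ∈ {u | Sat N u χ₁}} :=
      e.subtypeEquiv (fun v => hset v)
    constructor
    · intro H hw
      have hw' : Sat M w χ₁ := (hset w).mpr hw
      have := (ih₂ (M.restrict {u | Sat M u χ₁}) (N.restrict {u | Sat N u χ₁}) e'
        (fun a v u => hR a v.1 u.1) (fun n v => hV n v.1) ⟨w, hw'⟩).mp (H hw')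
      exact this
    · intro H hw
      have := (ih₂ (M.restrict {u | Sat M u χ₁}) (N.restrict {u | Sat N u χ₁}) e'
        (fun a v u => hR a v.1 u.1) (fun n v => hV n v.1) ⟨w, hw⟩).mpr
        (H ((hset w).mp hw))
      exact this

/-- Validity of axiom A11: ⟨[G]⟩φ → ⟨G⟩[A∖G]φ. -/
theorem a11_valid {A : Type} [Fintype A] [DecidableEq A] (G : Finset A) (φ : Form A)
    (M : Model A) (hM : M.IsEpistemic) (w : M.W)
    (h : ∃ f : A → Form A, (∀ a, (f a).IsEL) ∧ Sat M w (gConj G f) ∧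
      ∀ g : A → Form A, (∀ a, (g a).IsEL) →
        Sat M w (Form.ann ((gConj G f).and (gConj Gᶜ g)) φ)) :
    ∃ f' : A → Form A, (∀ a, (f' a).IsEL) ∧
      ∃ h' : Sat M w (gConj G f'),
        ∀ g' : A → Form A, (∀ a, (g' a).IsEL) →
          Sat (M.restrict {v | Sat M v (gConj G f')}) ⟨w, h'⟩
            (Form.ann (gConj Gᶜ g') φ) := by
  obtain ⟨f, hfEL, hfw, hmain⟩ := h
  set ψ := gConj G f with hψdef
  have hψEL : ψ.IsEL := gConj_isEL G f hfEL
  refine ⟨f, hfEL, hfw, ?_⟩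
  intro g' hg'EL
  intro hχ
  -- the translated announcement for the outside agents
  set g : A → Form A := fun a => ψ.imp (ψ.rel (g' a)) with hgdef
  have hgEL : ∀ a, (g a).IsEL := fun a => ⟨hψEL, rel_isEL hψEL (hg'EL a)⟩
  have hg'conjEL : (gConj Gᶜ g').IsEL := gConj_isEL _ _ hg'EL
  have hrel : ψ.rel (gConj Gᶜ g') = gConj Gᶜ g := rel_gConj Gᶜ ψ g'
  -- satisfaction of the combined announcement in M
  have hsatg : ∀ (v : M.W) (hv : Sat M v ψ),
      Sat (M.restrict {u | Sat M u ψ}) ⟨v, hv⟩ (gConj Gᶜ g') ↔ Sat M v (gConj Gᶜ g) := by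
    intro v hv
    rw [← hrel]
    exact sat_rel _ hg'conjEL M ψ v hv
  have hθw : Sat M w (ψ.and (gConj Gᶜ g)) := ⟨hfw, (hsatg w hfw).mp hχ⟩
  have hφ := hmain g hgEL hθw
  -- transfer along the isomorphism between the two restrictions
  let e : {v : M.W // v ∈ {u | Sat M u (ψ.and (gConj Gᶜ g))}} ≃
      {v : {u : M.W // u ∈ {u | Sat M u ψ}} //
        v ∈ {u | Sat (M.restrict {u | Sat M u ψ}) u (gConj Gᶜ g')}} :=
    { toFun := fun v => ⟨⟨v.1, v.2.1⟩, (hsatg v.1 v.2.1).mpr v.2.2⟩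
      invFun := fun v => ⟨v.1.1, v.1.2, (hsatg v.1.1 v.1.2).mp v.2⟩
      left_inv := fun v => rfl
      right_inv := fun v => rfl }
  have := (sat_iso φ
    (M.restrict {u | Sat M u (ψ.and (gConj Gᶜ g))})
    ((M.restrict {u | Sat M u ψ}).restrict
      {u | Sat (M.restrict {u | Sat M u ψ}) u (gConj Gᶜ g')})
    e (fun a v u => Iff.rfl) (fun n v => Iff.rfl) ⟨w, hθw⟩).mp hφ
  exact this
end

section
/- Superadditivity (C5) for coalition announcements: if G ∩ H = ∅, then ⟨[G]⟩φ ∧ ⟨[H]⟩ψ → ⟨[G∪H]⟩(φ ∧ ψ) is valid in all pointed epistemic models. -/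
/-- (M,w) ⊨ ⟨[G]⟩ P : coalition G has an announcement such that, simultaneously with
any announcement of the complement, P holds in the updated model. -/
def CoalWin {A : Type} [Fintype A] [DecidableEq A] (G : Finset A)
    (P : (M : Model A) → M.W → Prop) (M : Model A) (w : M.W) : Prop :=
  ∃ f : A → Form A, (∀ a, (f a).IsEL) ∧
    ∀ g : A → Form A, (∀ a, (g a).IsEL) →
      Sat M w (gConj G f) ∧
      ∀ h : Sat M w ((gConj G f).and (gConj Gᶜ g)),
        P (M.restrict {v | Sat M v ((gConj G f).and (gConj Gᶜ g))}) ⟨w, h⟩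

lemma sat_and {A : Type} (M : Model A) (w : M.W) (φ ψ : Form A) :
    Sat M w (φ.and ψ) ↔ Sat M w φ ∧ Sat M w ψ := Iff.rfl

lemma sat_foldr {A : Type} (M : Model A) (v : M.W) (f : A → Form A) (l : List A) :
    Sat M v (l.foldr (fun a r => (Form.know a (f a)).and r) Form.top) ↔
      ∀ a ∈ l, Sat M v (Form.know a (f a)) := by
  induction l with
  | nil => simp [Form.top, Sat]
  | cons a l ih =>
      simp only [List.foldr_cons, sat_and, ih, List.mem_cons]
      constructor
      · rintro ⟨h1, h2⟩ b hb
        rcases hb with rfl | hb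
        · exact h1
        · exact h2 b hb
      · intro h
        exact ⟨h a (Or.inl rfl), fun b hb => h b (Or.inr hb)⟩

lemma sat_gConj {A : Type} (M : Model A) (v : M.W) (G : Finset A) (f : A → Form A) :
    Sat M v (gConj G f) ↔ ∀ a ∈ G, Sat M v (Form.know a (f a)) := by
  rw [gConj, sat_foldr]
  simp

lemma sat_restrict_congr {A : Type} (M : Model A) {S T : Set M.W} (hST : S = T)
    (w : M.W) (hS : w ∈ S) (hT : w ∈ T) (χ : Form A) :
    Sat (M.restrict S) ⟨w, hS⟩ χ → Sat (M.restrict T) ⟨w, hT⟩ χ := by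
  subst hST; exact id

/-- Superadditivity C5: for disjoint G, H, ⟨[G]⟩φ ∧ ⟨[H]⟩ψ → ⟨[G∪H]⟩(φ ∧ ψ) is valid. -/
theorem coal_superadd {A : Type} [Fintype A] [DecidableEq A] (G H : Finset A)
    (hGH : Disjoint G H) (φ ψ : Form A)
    (M : Model A) (hM : M.IsEpistemic) (w : M.W)
    (hG : CoalWin G (fun N v => Sat N v φ) M w)
    (hH : CoalWin H (fun N v => Sat N v ψ) M w) :
    CoalWin (G ∪ H) (fun N v => Sat N v (φ.and ψ)) M w := by
  classical
  obtain ⟨fG, hfGEL, hfG⟩ := hG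
  obtain ⟨fH, hfHEL, hfH⟩ := hH
  have hdisj : ∀ a ∈ H, a ∉ G := fun a ha hg => Finset.disjoint_left.mp hGH hg ha
  refine ⟨fun a => if a ∈ G then fG a else fH a, ?_, ?_⟩
  · intro a; by_cases h : a ∈ G <;> simp [h, hfGEL, hfHEL]
  intro g hgEL
  have hbaseG : Sat M w (gConj G fG) := (hfG (fun _ => Form.top) (fun _ => trivial)).1
  have hbaseH : Sat M w (gConj H fH) := (hfH (fun _ => Form.top) (fun _ => trivial)).1
  -- characterization of the combined formula
  have key : ∀ v : M.W,
      Sat M v ((gConj (G ∪ H) (fun a => if a ∈ G then fG a else fH a)).and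
        (gConj (G ∪ H)ᶜ g)) ↔
      ((∀ a ∈ G, Sat M v (Form.know a (fG a))) ∧
       (∀ a ∈ H, Sat M v (Form.know a (fH a))) ∧
       (∀ a, a ∉ G → a ∉ H → Sat M v (Form.know a (g a)))) := by
    intro v
    rw [sat_and, sat_gConj, sat_gConj]
    constructor
    · rintro ⟨h1, h2⟩
      refine ⟨?_, ?_, ?_⟩
      · intro a ha; simpa [ha] using h1 a (Finset.mem_union_left _ ha)
      · intro a ha; simpa [hdisj a ha] using h1 a (Finset.mem_union_right _ ha)
      · intro a hg hh
        exact h2 a (by simp [Finset.mem_compl, Finset.mem_union, hg, hh])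
    · rintro ⟨h1, h2, h3⟩
      constructor
      · intro a ha
        rcases Finset.mem_union.mp ha with h | h
        · simpa [h] using h1 a h
        · simpa [hdisj a h] using h2 a h
      · intro a ha
        rw [Finset.mem_compl, Finset.mem_union] at ha
        push_neg at ha
        exact h3 a ha.1 ha.2
  constructor
  · rw [sat_gConj]
    intro a ha
    rcases Finset.mem_union.mp ha with h | h
    · simpa [h] using (sat_gConj M w G fG).mp hbaseG a h
    · simpa [hdisj a h] using (sat_gConj M w H fH).mp hbaseH a h
  intro h
  obtain ⟨k1, k2, k3⟩ := (key w).mp h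
  set gG : A → Form A := fun a => if a ∈ H then fH a else g a with hgGdef
  set gH : A → Form A := fun a => if a ∈ G then fG a else g a with hgHdef
  have keyG : ∀ v : M.W, Sat M v ((gConj G fG).and (gConj Gᶜ gG)) ↔
      ((∀ a ∈ G, Sat M v (Form.know a (fG a))) ∧
       (∀ a ∈ H, Sat M v (Form.know a (fH a))) ∧
       (∀ a, a ∉ G → a ∉ H → Sat M v (Form.know a (g a)))) := by
    intro v
    rw [sat_and, sat_gConj, sat_gConj]
    constructor
    · rintro ⟨h1, h2⟩
      refine ⟨h1, ?_, ?_⟩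
      · intro a ha
        simpa [hgGdef, ha] using h2 a (Finset.mem_compl.mpr (hdisj a ha))
      · intro a hg hh
        simpa [hgGdef, hh] using h2 a (Finset.mem_compl.mpr hg)
    · rintro ⟨h1, h2, h3⟩
      refine ⟨h1, ?_⟩
      intro a ha
      rw [Finset.mem_compl] at ha
      by_cases hh : a ∈ H
      · simpa [hgGdef, hh] using h2 a hh
      · simpa [hgGdef, hh] using h3 a ha hh
  have keyH : ∀ v : M.W, Sat M v ((gConj H fH).and (gConj Hᶜ gH)) ↔
      ((∀ a ∈ G, Sat M v (Form.know a (fG a))) ∧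
       (∀ a ∈ H, Sat M v (Form.know a (fH a))) ∧
       (∀ a, a ∉ G → a ∉ H → Sat M v (Form.know a (g a)))) := by
    intro v
    rw [sat_and, sat_gConj, sat_gConj]
    constructor
    · rintro ⟨h1, h2⟩
      refine ⟨?_, h1, ?_⟩
      · intro a ha
        simpa [hgHdef, ha] using
          h2 a (Finset.mem_compl.mpr (fun hh => hdisj a hh ha))
      · intro a hg hh
        simpa [hgHdef, hg] using h2 a (Finset.mem_compl.mpr hh)
    · rintro ⟨h1, h2, h3⟩
      refine ⟨h2, ?_⟩
      intro a ha
      rw [Finset.mem_compl] at ha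
      by_cases hg' : a ∈ G
      · simpa [hgHdef, hg'] using h1 a hg'
      · simpa [hgHdef, hg'] using h3 a hg' ha
  have hgGEL : ∀ a, (gG a).IsEL := by
    intro a; by_cases hh : a ∈ H <;> simp [hgGdef, hh, hfHEL, hgEL]
  have hgHEL : ∀ a, (gH a).IsEL := by
    intro a; by_cases hg' : a ∈ G <;> simp [hgHdef, hg', hfGEL, hgEL]
  have hG' : Sat M w ((gConj G fG).and (gConj Gᶜ gG)) := (keyG w).mpr ⟨k1, k2, k3⟩
  have hH' : Sat M w ((gConj H fH).and (gConj Hᶜ gH)) := (keyH w).mpr ⟨k1, k2, k3⟩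
  have hφ := (hfG gG hgGEL).2 hG'
  have hψ := (hfH gH hgHEL).2 hH'
  have hSG : {v | Sat M v ((gConj G fG).and (gConj Gᶜ gG))}
      = {v | Sat M v ((gConj (G ∪ H) (fun a => if a ∈ G then fG a else fH a)).and
          (gConj (G ∪ H)ᶜ g))} := by
    ext v; rw [Set.mem_setOf_eq, Set.mem_setOf_eq, keyG, key]
  have hSH : {v | Sat M v ((gConj H fH).and (gConj Hᶜ gH))}
      = {v | Sat M v ((gConj (G ∪ H) (fun a => if a ∈ G then fG a else fH a)).and
          (gConj (G ∪ H)ᶜ g))} := by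
    ext v; rw [Set.mem_setOf_eq, Set.mem_setOf_eq, keyH, key]
  exact ⟨sat_restrict_congr M hSG w hG' h φ hφ,
         sat_restrict_congr M hSH w hH' h ψ hψ⟩
end
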